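/- Let P be a totally ordered set, V a pointwise finite dimensional persistence module indexed by P, z ∈ P, and B a basis of V_z compatible with the flag of kernels of V at z. Let B* be the dual basis of (V_z)* corresponding to B. Then B* is a basis of V*_z compatible with the flag of images of the dual persistence module V* at z (where z is viewed in the opposite order P^op). -/

import Mathlib

universe u v w w'

/-- A persistence module indexed by a poset `P`, over a field `k`. -/
structure PersMod (k : Type u) [Field k] (P : Type v) [PartialOrder P] :
    Type (max u v (w + 1)) where
  space : P → Type w
  [acg : ∀ x, AddCommGroup (space x)]
  [mod : ∀ x, Module k (space x)]
  map : ∀ {x y : P}, x ≤ y → (space x →ₗ[k] space y)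
  map_id : ∀ x : P, map (le_refl x) = LinearMap.id
  map_comp : ∀ {x y z : P} (hxy : x ≤ y) (hyz : y ≤ z),
    (map hyz).comp (map hxy) = map (hxy.trans hyz)

attribute [instance] PersMod.acg PersMod.mod

variable (k : Type u) [Field k] {P : Type v} [PartialOrder P]

/-- A morphism of persistence modules (a natural transformation). -/
structure PersHom (V : PersMod.{u, v, w} k P) (W : PersMod.{u, v, w'} k P) where
  app : ∀ x : P, V.space x →ₗ[k] W.space x
  natural : ∀ {x y : P} (h : x ≤ y) (v : V.space x),
    app y (V.map h v) = W.map h (app x v)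

/-- An isomorphism of persistence modules. -/
structure PersIso (V : PersMod.{u, v, w} k P) (W : PersMod.{u, v, w'} k P) where
  app : ∀ x : P, V.space x ≃ₗ[k] W.space x
  natural : ∀ {x y : P} (h : x ≤ y) (v : V.space x),
    app y (V.map h v) = W.map h (app x v)

/-- A subset `I` of a poset is convex if `x ≤ y ≤ z`, `x ∈ I`, `z ∈ I` imply `y ∈ I`. -/
def IsConvexIn (I : Set P) : Prop :=
  ∀ ⦃x y z : P⦄, x ∈ I → z ∈ I → x ≤ y → y ≤ z → y ∈ I

/-- A subset `I` of a poset is connected if any two points of `I` are joined by a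
zigzag path inside `I`. -/
def IsConnectedIn (I : Set P) : Prop :=
  ∀ x ∈ I, ∀ z ∈ I, ∃ (n : ℕ) (c : ℕ → P), (∀ i ≤ n, c i ∈ I) ∧ c 0 = x ∧ c n = z ∧
    ∀ i < n, c i ≤ c (i + 1) ∨ c (i + 1) ≤ c i

/-- An interval in a poset: nonempty, convex and connected. -/
def IsPosetInterval (I : Set P) : Prop :=
  I.Nonempty ∧ IsConvexIn I ∧ IsConnectedIn I

open Classical in
/-- The subspace of `k` used as the value of the constant module at `x`. -/
noncomputable def constSub (I : Set P) (x : P) : Submodule k k :=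
  if x ∈ I then ⊤ else ⊥

open Classical in
/-- The structure map of the constant module. -/
noncomputable def constMap (I : Set P) (x y : P) :
    constSub k I x →ₗ[k] constSub k I y :=
  LinearMap.codRestrict (constSub k I y)
    ((if y ∈ I then (LinearMap.id : k →ₗ[k] k) else 0).comp (constSub k I x).subtype)
    (fun c => by
      by_cases hy : y ∈ I
      · simp [constSub, hy]
      · rw [if_neg hy, LinearMap.zero_comp, LinearMap.zero_apply]
        exact Submodule.zero_mem _)

open Classical in
/-- The constant (interval) module `M(I)` attached to a convex subset `I`. -/
noncomputable def constMod (I : Set P) (hI : IsConvexIn I) : PersMod.{u, v, u} k P where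
  space x := constSub k I x
  map {x y} _ := constMap k I x y
  map_id := fun x => by
    ext c
    by_cases hx : x ∈ I
    · simp [constMap, hx]
    · have hc : (c : k) = 0 := by
        have key : ∀ a : k, a ∈ constSub k I x → a = 0 := fun a ha => by
          rw [show constSub k I x = ⊥ from if_neg hx] at ha
          exact (Submodule.mem_bot k).mp ha
        exact key _ c.2
      simp [constMap, hx, hc]
  map_comp := fun {x y z} hxy hyz => by
    ext c
    by_cases hz : z ∈ I
    · by_cases hy : y ∈ I
      · simp [constMap, hy, hz]
      · have hx : x ∉ I := fun hx => hy (hI hx hz hxy hyz)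
        have hc : (c : k) = 0 := by
          have key : ∀ a : k, a ∈ constSub k I x → a = 0 := fun a ha => by
            rw [show constSub k I x = ⊥ from if_neg hx] at ha
            exact (Submodule.mem_bot k).mp ha
          exact key _ c.2
        simp [constMap, hy, hz, hc]
    · simp [constMap, hz]

/-- A submodule of a persistence module: a family of subspaces preserved by the
structure maps. -/
structure PersSubmod (V : PersMod.{u, v, w} k P) where
  carrier : ∀ x : P, Submodule k (V.space x)
  mapLe : ∀ {x y : P} (h : x ≤ y), ∀ v ∈ carrier x, V.map h v ∈ carrier y

/-- A submodule of a persistence module, viewed as a persistence module in its own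
right. -/
def PersSubmod.toPersMod {V : PersMod.{u, v, w} k P} (U : PersSubmod k V) :
    PersMod.{u, v, w} k P where
  space x := U.carrier x
  map {x y} h := (V.map h).restrict (U.mapLe h)
  map_id := fun x => by
    ext c
    simp [LinearMap.restrict_apply, V.map_id]
  map_comp := fun {x y z} hxy hyz => by
    ext c
    have := LinearMap.congr_fun (V.map_comp hxy hyz) (c : V.space x)
    simpa [LinearMap.restrict_apply] using this

/-- A persistence module is an interval module if it is isomorphic to a constant
module `M(I)` for some interval `I`. -/
def IsIntervalModule (V : PersMod.{u, v, w} k P) : Prop :=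
  ∃ (I : Set P) (hI : IsPosetInterval I), Nonempty (PersIso k V (constMod k I hI.2.1))

/-- `A` is an internal direct sum decomposition of `V`:
at each point the subspaces are independent and span everything. -/
def IsDecomp (V : PersMod.{u, v, w} k P) (A : Set (PersSubmod k V)) : Prop :=
  ∀ x : P, iSupIndep (fun U : A => (U : PersSubmod k V).carrier x) ∧
    ⨆ U : A, (U : PersSubmod k V).carrier x = ⊤

/-- An interval decomposition of `V`. -/
def IsIntervalDecomp (V : PersMod.{u, v, w} k P) (A : Set (PersSubmod k V)) : Prop :=
  IsDecomp k V A ∧ ∀ U ∈ A, IsIntervalModule k U.toPersMod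

/-- `V` has an interval decomposition. -/
def HasIntervalDecomp (V : PersMod.{u, v, w} k P) : Prop :=
  ∃ A : Set (PersSubmod k V), IsIntervalDecomp k V A

/-- The dual persistence module `V*`, indexed by the opposite poset. -/
noncomputable def dualMod {P : Type v} [PartialOrder P] (V : PersMod.{u, v, w} k P) :
    PersMod.{u, v, max u w} k Pᵒᵈ where
  space x := Module.Dual k (V.space (OrderDual.ofDual x))
  map {x y} h :=
    (V.map (show OrderDual.ofDual y ≤ OrderDual.ofDual x from h)).dualMap
  map_id := fun x => by
    show (V.map (le_refl (OrderDual.ofDual x))).dualMap = LinearMap.id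
    rw [V.map_id]
    exact LinearMap.dualMap_id
  map_comp := fun {x y z} hxy hyz => by
    show ((V.map (show OrderDual.ofDual z ≤ OrderDual.ofDual y from hyz)).dualMap).comp
        (V.map (show OrderDual.ofDual y ≤ OrderDual.ofDual x from hxy)).dualMap =
      (V.map (show OrderDual.ofDual z ≤ OrderDual.ofDual x from hxy.trans hyz)).dualMap
    rw [LinearMap.dualMap_comp_dualMap, V.map_comp]

/-- The quotient of a persistence module by a submodule. -/
def quotMod {P : Type v} [PartialOrder P] (V : PersMod.{u, v, w} k P)
    (W : PersSubmod k V) : PersMod.{u, v, w} k P where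
  space x := V.space x ⧸ W.carrier x
  map {x y} h := Submodule.mapQ (W.carrier x) (W.carrier y) (V.map h)
    (fun v hv => Submodule.mem_comap.mpr (W.mapLe h v hv))
  map_id := fun x => by
    apply Submodule.linearMap_qext
    ext v
    simp [Submodule.mapQ_apply, V.map_id]
  map_comp := fun {x y z} hxy hyz => by
    apply Submodule.linearMap_qext
    ext v
    have h := LinearMap.congr_fun (V.map_comp hxy hyz) v
    simp only [LinearMap.comp_apply] at h
    simp only [LinearMap.comp_apply, Submodule.mkQ_apply, Submodule.mapQ_apply]
    rw [h]


/-!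
A basis `b` is compatible with a subspace `W` exactly when `W` is spanned by the basis vectors it
contains. In that case a functional `φ` kills `W` iff it kills those basis vectors, so the
expansion `φ = ∑ φ (b i) • b*ᵢ` only involves dual vectors `b*ᵢ` with `b i ∉ W`, and each of
these annihilates `W`. Hence `b*` is compatible with the annihilator of `W`. Over a field the
image of a transpose is the annihilator of the kernel, so compatibility with the kernel flag of
`V` at `z` gives compatibility with the image flag of `V*` at `z`.
-/

open Submodule Set

namespace Module.Basis

variable {R M ι : Type*} [CommRing R] [AddCommGroup M] [Module R M]

def IsCompatibleWith (b : Basis ι R M) (W : Submodule R M) : Prop :=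
  span R (range b ∩ W) = W

variable [Fintype ι] [DecidableEq ι] {b : Basis ι R M} {W : Submodule R M}

theorem IsCompatibleWith.dualBasis_mem_dualAnnihilator (hb : b.IsCompatibleWith W) {i : ι}
    (hi : b i ∉ W) : b.dualBasis i ∈ W.dualAnnihilator := by
  rw [mem_dualAnnihilator, ← hb]
  intro v hv
  refine span_induction ?_ (map_zero _) (fun _ _ _ _ hx hy => by rw [map_add, hx, hy, add_zero])
    (fun c _ _ hx => by rw [map_smul, hx, smul_zero]) hv
  rintro _ ⟨⟨j, rfl⟩, hj⟩
  have hji : j ≠ i := fun hji => hi (hji ▸ hj)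
  rw [dualBasis_apply_self, if_neg hji]

theorem IsCompatibleWith.dualBasis_dualAnnihilator (hb : b.IsCompatibleWith W) :
    b.dualBasis.IsCompatibleWith W.dualAnnihilator := by
  refine le_antisymm (span_le.2 inter_subset_right) fun φ hφ => ?_
  rw [← b.sum_dual_apply_smul_coord φ, ← coe_dualBasis]
  refine sum_mem fun i _ => ?_
  by_cases hi : b i ∈ W
  · rw [(mem_dualAnnihilator φ).1 hφ _ hi, zero_smul]
    exact zero_mem _
  · exact smul_mem _ _ (subset_span ⟨mem_range_self i, hb.dualBasis_mem_dualAnnihilator hi⟩)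

end Module.Basis

theorem dualBasis_compatible_with_image_flag (P : Type v) [LinearOrder P]
    (V : PersMod.{u, v, w} k P)
    (z : P) (ι : Type w') [Fintype ι] [DecidableEq ι] (b : Module.Basis ι k (V.space z))
    (hcompat : ∀ (x : P) (h : z ≤ x),
      Submodule.span k (Set.range ⇑b ∩ LinearMap.ker (V.map h)) =
        LinearMap.ker (V.map h)) :
    ∀ (x : P) (h : z ≤ x),
      Submodule.span k (Set.range ⇑b.dualBasis ∩ LinearMap.range ((V.map h).dualMap)) =
        LinearMap.range ((V.map h).dualMap) := by
  intro x h
  rw [LinearMap.range_dualMap_eq_dualAnnihilator_ker]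
  exact Module.Basis.IsCompatibleWith.dualBasis_dualAnnihilator (hcompat x h)
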